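/- arXiv:1206.3826 — 5 statements merged into one kernel-verified Lean document; each statement's English description precedes it below -/
import Mathlib

section
/- For integers k, m ≥ 0 and real x, ∫₀ˣ B_k(z)·B_m(z) dz = (k! m!)/((k+m+1)!) · ∑_{j=0}^{k} (-1)^j · C(k+m+1, k-j) · (B_{k-j}(x)·B_{m+j+1}(x) - B_{k-j}·B_{m+j+1}), where C(n,r) denotes a binomial coefficient. -/
/-!
If `f n' = n f (n-1)` (an Appell sequence, such as the Bernoulli polynomials), the product rule gives
`(f (k+1) f (m+1))' = (k+1) f k f (m+1) + (m+1) f (k+1) f m`, so repeatedly trading a derivative from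
the first factor to the second (integration by parts, run `k` times) produces an explicit primitive
of `f k f m`: an alternating sum of products `f (k-j) f (m+j+1)` with binomial weights.
-/

/-- The `k`-th Bernoulli polynomial evaluated at a real `x`. -/
noncomputable def B (k : ℕ) (x : ℝ) : ℝ :=
  Polynomial.aeval x (Polynomial.bernoulli k)

open Finset

lemma B_eq_bernoulliFun : B = bernoulliFun := by
  funext k x
  rw [B, bernoulliFun, Polynomial.aeval_def, Polynomial.eval_map]

section Appell

variable (f : ℕ → ℝ → ℝ)

def appellProdPrimitive (k m : ℕ) (x : ℝ) : ℝ :=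
  ∑ j ∈ range (k + 1), (-1 : ℝ) ^ j * ((k + m + 1).choose (k - j)) * (f (k - j) x * f (m + j + 1) x)

lemma appellProdPrimitive_succ (k m : ℕ) (x : ℝ) :
    appellProdPrimitive f (k + 1) m x =
      ((k + m + 2).choose (k + 1)) * (f (k + 1) x * f (m + 1) x) -
        appellProdPrimitive f k (m + 1) x := by
  rw [appellProdPrimitive, sum_range_succ', appellProdPrimitive, sub_eq_neg_add, ← sum_neg_distrib]
  congr 1
  · refine sum_congr rfl fun j _ => ?_
    rw [show k + 1 - (j + 1) = k - j by omega, show k + 1 + m + 1 = k + (m + 1) + 1 by ring,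
      show m + (j + 1) + 1 = m + 1 + j + 1 by ring, pow_succ]
    ring
  · simp [show k + 1 + m + 1 = k + m + 2 by ring]

variable {f}

lemma hasDerivAt_appellProdPrimitive (hf : ∀ n x, HasDerivAt (f n) (n * f (n - 1) x) x)
    (k m : ℕ) (x : ℝ) :
    HasDerivAt (appellProdPrimitive f k m)
      ((m + 1) * ((k + m + 1).choose k) * (f k x * f m x)) x := by
  induction k generalizing m with
  | zero =>
    have hprimitive : appellProdPrimitive f 0 m = f 0 * f (m + 1) := by
      funext y; simp [appellProdPrimitive]
    rw [hprimitive]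
    refine ((hf 0 x).mul (hf (m + 1) x)).congr_deriv ?_
    simp only [Nat.cast_zero, zero_mul, zero_add, Nat.choose_zero_right, add_tsub_cancel_right]
    push_cast
    ring
  | succ k ih =>
    have hchoose : ((k + m + 2).choose (k + 1) : ℝ) * (k + 1) =
        ((k + m + 2).choose k) * (m + 2) := by
      exact_mod_cast (Nat.choose_succ_right_eq (k + m + 2) k).trans (by congr 1; omega)
    rw [show appellProdPrimitive f (k + 1) m = fun y => _ from funext (appellProdPrimitive_succ f k m)]
    refine ((((hf (k + 1) x).mul (hf (m + 1) x)).const_mul _).sub (ih (m + 1))).congr_deriv ?_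
    rw [show k + 1 + m + 1 = k + m + 2 by ring, show k + (m + 1) + 1 = k + m + 2 by ring]
    simp only [add_tsub_cancel_right]
    push_cast
    linear_combination (f k x * f (m + 1) x) * hchoose

lemma succ_mul_choose_mul_factorial_mul_factorial (k m : ℕ) :
    (m + 1) * (k + m + 1).choose k * k.factorial * m.factorial = (k + m + 1).factorial := by
  have h := Nat.add_choose_mul_factorial_mul_factorial (m + 1) k
  rw [Nat.factorial_succ, show m + 1 + k = k + m + 1 by ring] at h
  rw [← h]
  ring

lemma integral_appell_mul (hf : ∀ n x, HasDerivAt (f n) (n * f (n - 1) x) x) (k m : ℕ) (a b : ℝ) :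
    ∫ z in a..b, f k z * f m z =
      ((k.factorial : ℝ) * m.factorial / (k + m + 1).factorial) *
        ∑ j ∈ range (k + 1), (-1 : ℝ) ^ j * ((k + m + 1).choose (k - j)) *
          (f (k - j) b * f (m + j + 1) b - f (k - j) a * f (m + j + 1) a) := by
  set c : ℝ := (k.factorial : ℝ) * m.factorial / (k + m + 1).factorial
  have hc : c * ((m + 1) * ((k + m + 1).choose k)) = 1 := by
    have h : ((m + 1) * (k + m + 1).choose k * k.factorial * m.factorial : ℝ) =
        (k + m + 1).factorial := by
      exact_mod_cast succ_mul_choose_mul_factorial_mul_factorial k m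
    rw [div_mul_eq_mul_div, div_eq_one_iff_eq (by positivity), ← h]
    ring
  have hderiv (z : ℝ) : HasDerivAt (fun y => c * appellProdPrimitive f k m y) (f k z * f m z) z :=
    ((hasDerivAt_appellProdPrimitive hf k m z).const_mul c).congr_deriv
      (by linear_combination (f k z * f m z) * hc)
  have hcont (n : ℕ) : Continuous (f n) :=
    continuous_iff_continuousAt.2 fun y => (hf n y).continuousAt
  rw [intervalIntegral.integral_eq_sub_of_hasDerivAt (fun z _ => hderiv z)
    (((hcont k).mul (hcont m)).intervalIntegrable _ _), ← mul_sub, appellProdPrimitive,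
    appellProdPrimitive, ← sum_sub_distrib]
  simp only [mul_sub]

end Appell

theorem integral_prod_two_bernoulli_poly (k m : ℕ) (x : ℝ) :
    ∫ z in (0:ℝ)..x, B k z * B m z =
      ((k.factorial : ℝ) * m.factorial / (k + m + 1).factorial) *
        ∑ j ∈ Finset.range (k + 1),
          (-1 : ℝ) ^ j * ((k + m + 1).choose (k - j)) *
            (B (k - j) x * B (m + j + 1) x - B (k - j) 0 * B (m + j + 1) 0) := by
  rw [B_eq_bernoulliFun]
  exact integral_appell_mul hasDerivAt_bernoulliFun k m 0 x
end

section
/- Let r ≥ 1 and k_1, …, k_r ≥ 0 be integers and x a real number. Define Ĩ_{k_1,…,k_r}(x) = (1/(k_1!⋯k_r!)) ∫₀ˣ B_{k_1}(z)⋯B_{k_r}(z) dz and C̃_{k_1,…,k_r}(x) = (1/(k_1!⋯k_r!)) (B_{k_1}(x)⋯B_{k_r}(x) − B_{k_1}⋯B_{k_r}), with the convention that C̃ is zero whenever a factorial has a negative argument. Then Ĩ_{k_1,…,k_r}(x) = ∑_{a=0}^{k_1+⋯+k_{r-1}} (-1)^a ∑_{i_1+⋯+i_{r-1}=a, i_j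 ≥ 0} binom(a; i_1,…,i_{r-1}) · C̃_{k_1−i_1, …, k_{r-1}−i_{r-1}, k_r+a+1}(x), where binom(a; i_1,…,i_{r-1}) = a!/(i_1!⋯i_{r-1}!) is the multinomial coefficient. -/
/-- `C̃_{k_1,…,k_r}(x)`: the normalized product-difference of Bernoulli polynomials,
set to `0` whenever some index is negative. -/
noncomputable def Ct {r : ℕ} (k : Fin r → ℤ) (x : ℝ) : ℝ :=
  if ∀ j, 0 ≤ k j then
    (∏ j, B (k j).toNat x - ∏ j, B (k j).toNat 0) /
      ∏ j, ((k j).toNat.factorial : ℝ)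
  else 0

/-- `Ĩ_{k_1,…,k_r}(x)`: the normalized integral of a product of Bernoulli polynomials. -/
noncomputable def It {r : ℕ} (k : Fin r → ℕ) (x : ℝ) : ℝ :=
  (∫ z in (0:ℝ)..x, ∏ j, B (k j) z) / ∏ j, ((k j).factorial : ℝ)

/-!
With `c_n = B_n / n!` (and `c_n = 0` for `n < 0`) one has `c_n' = c_{n-1}`, and `C̃` is the
difference between the values at `x` and at `0` of a product of `c`'s. Integrate
`(c_{k_1} ⋯ c_{k_{r-1}}) · c_{k_r}` by parts repeatedly, differentiating the first factor and
integrating the second. The `a`-th derivative of the first factor is the multinomial Leibniz sum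
of `c_{k_1 - i_1} ⋯ c_{k_{r-1} - i_{r-1}}`, and it vanishes once `a > k_1 + ⋯ + k_{r-1}`, so the
process stops and the boundary terms are exactly the `C̃`'s of the formula.
-/

open Finset
open scoped Nat

namespace Nat

variable {ι : Type*} [Fintype ι] [DecidableEq ι]

theorem prod_factorial_eq_mul_prod_factorial_sub_single {i : ι → ℕ} {l : ι} (hl : i l ≠ 0) :
    ∏ j, (i j)! = i l * ∏ j, ((i - Pi.single l 1 : ι → ℕ) j)! := by
  rw [Fintype.prod_eq_mul_prod_compl l, Fintype.prod_eq_mul_prod_compl l, ← mul_assoc]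
  congr 1
  · simp [Nat.mul_factorial_pred hl]
  · refine prod_congr rfl fun j hj => ?_
    simp [show j ≠ l by simpa using hj]

theorem sum_sub_single {i : ι → ℕ} {l : ι} (hl : i l ≠ 0) :
    ∑ j, (i - Pi.single l 1 : ι → ℕ) j = ∑ j, i j - 1 := by
  rw [Pi.sub_def, sum_tsub_distrib, Finset.sum_pi_single']
  · simp
  intro j _
  rcases eq_or_ne j l with rfl | h
  · simpa using Nat.one_le_iff_ne_zero.mpr hl
  · simp [h]

theorem multinomial_eq_sum_multinomial_sub_single {i : ι → ℕ} (hi : ∑ j, i j ≠ 0) :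
    multinomial univ i = ∑ l with i l ≠ 0, multinomial univ (i - Pi.single l 1) := by
  refine Nat.eq_of_mul_eq_mul_left (prod_pos fun j _ => (i j).factorial_pos :
    0 < ∏ j, (i j)!) ?_
  have hterm : ∀ l, i l ≠ 0 →
      (∏ j, (i j)!) * multinomial univ (i - Pi.single l 1) = i l * (∑ j, i j - 1)! := by
    intro l hl
    rw [prod_factorial_eq_mul_prod_factorial_sub_single hl, mul_assoc, multinomial_spec,
      sum_sub_single hl]
  rw [multinomial_spec, mul_sum, sum_congr rfl fun l hl => hterm l (mem_filter.mp hl).2,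
    ← sum_mul, sum_filter_ne_zero, Nat.mul_factorial_pred hi]

end Nat

theorem Finset.Nat.sum_antidiagonalTuple_add_single {M : Type*} [AddCommMonoid M] {r : ℕ}
    (l : Fin r) (a : ℕ) (f : (Fin r → ℕ) → M) :
    ∑ i ∈ antidiagonalTuple r a, f (i + Pi.single l 1) =
      ∑ i ∈ antidiagonalTuple r (a + 1) with i l ≠ 0, f i := by
  refine sum_nbij' (· + Pi.single l 1) (· - Pi.single l 1) ?_ ?_ ?_ ?_ fun _ _ => rfl
  · intro i hi
    rw [mem_antidiagonalTuple] at hi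
    simp [mem_antidiagonalTuple, sum_add_distrib, hi]
  · intro i hi
    rw [mem_filter, mem_antidiagonalTuple] at hi
    rw [mem_antidiagonalTuple, Nat.sum_sub_single hi.2, hi.1, Nat.add_sub_cancel]
  · intro i _
    simp
  · intro i hi
    ext j
    rcases eq_or_ne j l with rfl | h
    · simpa using Nat.sub_add_cancel (Nat.one_le_iff_ne_zero.mpr (mem_filter.mp hi).2)
    · simp [h]

section MultinomialLeibniz

variable {α R : Type*} [CommSemiring R] {r : ℕ}

noncomputable def multinomialLeibniz (u : Fin r → ℕ → α → R) (a : ℕ) (z : α) : R :=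
  ∑ i ∈ Finset.Nat.antidiagonalTuple r a, (Nat.multinomial univ i : R) * ∏ j, u j (i j) z

theorem multinomialLeibniz_zero (u : Fin r → ℕ → α → R) (z : α) :
    multinomialLeibniz u 0 z = ∏ j, u j 0 z := by
  simp [multinomialLeibniz, Finset.Nat.antidiagonalTuple_zero_right, Nat.multinomial]

theorem multinomialLeibniz_eq_zero {u : Fin r → ℕ → α → R} {N : Fin r → ℕ}
    (hu : ∀ j n, N j < n → u j n = 0) {a : ℕ} (ha : ∑ j, N j < a) :
    multinomialLeibniz u a = 0 := by
  ext z
  refine sum_eq_zero fun i hi => ?_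
  obtain ⟨j, hj⟩ : ∃ j, N j < i j := by
    by_contra! h
    have := sum_le_sum fun j (_ : j ∈ univ) => h j
    rw [Finset.Nat.mem_antidiagonalTuple.mp hi] at this
    omega
  exact mul_eq_zero_of_right _ (prod_eq_zero (mem_univ j) (by simp [hu j _ hj]))

theorem sum_multinomial_mul_sum_add_single (P : (Fin r → ℕ) → R) (a : ℕ) :
    ∑ i ∈ Finset.Nat.antidiagonalTuple r a,
        (Nat.multinomial univ i : R) * ∑ l, P (i + Pi.single l 1) =
      ∑ i ∈ Finset.Nat.antidiagonalTuple r (a + 1), (Nat.multinomial univ i : R) * P i :=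
  calc ∑ i ∈ Finset.Nat.antidiagonalTuple r a,
        (Nat.multinomial univ i : R) * ∑ l, P (i + Pi.single l 1)
      = ∑ l, ∑ i ∈ Finset.Nat.antidiagonalTuple r a,
          (Nat.multinomial univ (i + Pi.single l 1 - Pi.single l 1) : R) *
            P (i + Pi.single l 1) := by
        simp only [mul_sum, add_tsub_cancel_right]
        exact sum_comm
    _ = ∑ l, ∑ i ∈ Finset.Nat.antidiagonalTuple r (a + 1) with i l ≠ 0,
          (Nat.multinomial univ (i - Pi.single l 1) : R) * P i :=
        sum_congr rfl fun l _ => Finset.Nat.sum_antidiagonalTuple_add_single l a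
          fun i => (Nat.multinomial univ (i - Pi.single l 1) : R) * P i
    _ = ∑ i ∈ Finset.Nat.antidiagonalTuple r (a + 1), (Nat.multinomial univ i : R) * P i := by
        rw [sum_comm' (t' := Finset.Nat.antidiagonalTuple r (a + 1)) (s' := fun i => {l | i l ≠ 0})
          (by simp [and_comm])]
        refine sum_congr rfl fun i hi => ?_
        rw [← sum_mul, ← Nat.cast_sum, ← Nat.multinomial_eq_sum_multinomial_sub_single]
        simp [Finset.Nat.mem_antidiagonalTuple.mp hi]

variable {𝕜 𝔸 : Type*} [NontriviallyNormedField 𝕜] [NormedCommRing 𝔸] [NormedAlgebra 𝕜 𝔸]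
  {u : Fin r → ℕ → 𝕜 → 𝔸}

theorem hasDerivAt_prod_apply (hu : ∀ j n z, HasDerivAt (u j n) (u j (n + 1) z) z)
    (i : Fin r → ℕ) (z : 𝕜) :
    HasDerivAt (fun z => ∏ j, u j (i j) z)
      (∑ l, ∏ j, u j ((i + Pi.single l 1 : Fin r → ℕ) j) z) z := by
  convert HasDerivAt.fun_finsetProd fun j (_ : j ∈ univ) => hu j (i j) z using 2 with l
  rw [← mul_prod_erase univ _ (mem_univ l), smul_eq_mul, mul_comm]
  congr 1
  · refine prod_congr rfl fun j hj => ?_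
    simp [ne_of_mem_erase hj]
  · simp

theorem hasDerivAt_multinomialLeibniz (hu : ∀ j n z, HasDerivAt (u j n) (u j (n + 1) z) z)
    (a : ℕ) (z : 𝕜) :
    HasDerivAt (multinomialLeibniz u a) (multinomialLeibniz u (a + 1) z) z := by
  have hsum := HasDerivAt.fun_sum fun i (_ : i ∈ Finset.Nat.antidiagonalTuple r a) =>
    (hasDerivAt_prod_apply hu i z).const_mul (Nat.multinomial univ i : 𝔸)
  exact hsum.congr_deriv (sum_multinomial_mul_sum_add_single (fun i => ∏ j, u j (i j) z) a)

end MultinomialLeibniz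

theorem integral_mul_eq_sum_of_hasDerivAt {𝔸 : Type*} [NormedRing 𝔸] [NormedAlgebra ℝ 𝔸]
    [CompleteSpace 𝔸] {f g : ℕ → ℝ → 𝔸} {N : ℕ}
    (hf : ∀ n z, HasDerivAt (f n) (f (n + 1) z) z) (hfN : f (N + 1) = 0)
    (hg : ∀ n z, HasDerivAt (g (n + 1)) (g n z) z) (hg₀ : Continuous (g 0)) (a b : ℝ) :
    ∫ z in a..b, f 0 z * g 0 z =
      ∑ n ∈ range (N + 1), (-1) ^ n * (f n b * g (n + 1) b - f n a * g (n + 1) a) := by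
  have hf₀ : Continuous (f 0) := continuous_iff_continuousAt.2 fun z => (hf 0 z).continuousAt
  have hderiv : ∀ z, HasDerivAt (fun z => ∑ n ∈ range (N + 1), (-1) ^ n * (f n z * g (n + 1) z))
      (f 0 z * g 0 z) z := by
    intro z
    have hsum := HasDerivAt.fun_sum fun n (_ : n ∈ range (N + 1)) =>
      ((hf n z).mul (hg n z)).const_mul ((-1 : 𝔸) ^ n)
    refine hsum.congr_deriv ?_
    have htel : ∀ n, (-1 : 𝔸) ^ n * (f (n + 1) z * g (n + 1) z + f n z * g n z) =
        (-1) ^ n * (f n z * g n z) - (-1) ^ (n + 1) * (f (n + 1) z * g (n + 1) z) := by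
      intro n
      rw [pow_succ]
      noncomm_ring
    rw [sum_congr rfl fun n _ => htel n, sum_range_sub', hfN]
    simp
  rw [intervalIntegral.integral_eq_sub_of_hasDerivAt (fun z _ => hderiv z)
    ((hf₀.mul hg₀).intervalIntegrable a b), ← sum_sub_distrib]
  simp only [mul_sub]

theorem hasDerivAt_B (k : ℕ) (z : ℝ) : HasDerivAt (B (k + 1)) ((k + 1) * B k z) z := by
  refine ((Polynomial.bernoulli (k + 1)).hasDerivAt_aeval z).congr_deriv ?_
  simp [B, Polynomial.derivative_bernoulli_add_one]

/-- The `c_n` above: `B_n / n!`, extended by `0` to `n < 0` so that `c_n' = c_{n-1}` for all `n : ℤ`. -/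
noncomputable def scaledBernoulli (n : ℤ) (z : ℝ) : ℝ :=
  if 0 ≤ n then B n.toNat z / n.toNat ! else 0

theorem scaledBernoulli_natCast (n : ℕ) (z : ℝ) : scaledBernoulli n z = B n z / n ! := by
  simp [scaledBernoulli]

theorem scaledBernoulli_of_neg {n : ℤ} (hn : n < 0) : scaledBernoulli n = 0 := by
  ext z; simp [scaledBernoulli, hn.not_ge]

theorem hasDerivAt_scaledBernoulli (n : ℤ) (z : ℝ) :
    HasDerivAt (scaledBernoulli n) (scaledBernoulli (n - 1) z) z := by
  rcases lt_trichotomy n 0 with hn | rfl | hn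
  · rw [scaledBernoulli_of_neg hn, scaledBernoulli_of_neg (by omega)]
    exact hasDerivAt_const z 0
  · have h₀ : scaledBernoulli 0 = fun _ => 1 := by ext; simp [scaledBernoulli, B]
    rw [h₀, scaledBernoulli_of_neg (by norm_num)]
    exact hasDerivAt_const z 1
  · obtain ⟨k, rfl⟩ : ∃ k : ℕ, n = k + 1 := ⟨(n - 1).toNat, by omega⟩
    have h : scaledBernoulli (k + 1) = fun z => B (k + 1) z / (k + 1)! := by
      ext z; exact_mod_cast scaledBernoulli_natCast (k + 1) z
    rw [h, add_sub_cancel_right, scaledBernoulli_natCast]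
    refine ((hasDerivAt_B k z).div_const ((k + 1)! : ℝ)).congr_deriv ?_
    rw [Nat.factorial_succ]
    push_cast
    field_simp

theorem continuous_scaledBernoulli (n : ℤ) : Continuous (scaledBernoulli n) :=
  continuous_iff_continuousAt.2 fun z => (hasDerivAt_scaledBernoulli n z).continuousAt

theorem Ct_eq_prod_sub_prod {r : ℕ} (k : Fin r → ℤ) (x : ℝ) :
    Ct k x = ∏ j, scaledBernoulli (k j) x - ∏ j, scaledBernoulli (k j) 0 := by
  unfold Ct
  split_ifs with h
  · simp only [scaledBernoulli, if_pos (h _), prod_div_distrib, sub_div]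
  · obtain ⟨j, hj⟩ := not_forall.mp h
    have hzero : ∀ y, ∏ j, scaledBernoulli (k j) y = 0 := fun y =>
      prod_eq_zero (mem_univ j) (by rw [scaledBernoulli_of_neg (not_le.mp hj)]; rfl)
    rw [hzero, hzero, sub_zero]

theorem It_eq_integral_prod {r : ℕ} (k : Fin r → ℕ) (x : ℝ) :
    It k x = ∫ z in (0 : ℝ)..x, ∏ j, scaledBernoulli (k j) z := by
  simp only [It, scaledBernoulli_natCast, prod_div_distrib, intervalIntegral.integral_div]

/-- Main theorem: the case `r + 1 ≥ 1` factors, with `r` front indices `k ∘ castSucc`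
and last index `k (Fin.last r)`. -/
theorem integral_prod_bernoulli_poly (r : ℕ) (k : Fin (r + 1) → ℕ) (x : ℝ) :
    It k x =
      ∑ a ∈ Finset.range ((∑ j : Fin r, k j.castSucc) + 1), (-1 : ℝ) ^ a *
        ∑ i ∈ Finset.Nat.antidiagonalTuple r a,
          (Nat.multinomial Finset.univ i : ℝ) *
            Ct (Fin.snoc (fun j : Fin r => (k j.castSucc : ℤ) - i j)
              ((k (Fin.last r) : ℤ) + a + 1)) x := by
  set u : Fin r → ℕ → ℝ → ℝ := fun j n => scaledBernoulli ((k j.castSucc : ℤ) - n)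
  set g : ℕ → ℝ → ℝ := fun n => scaledBernoulli ((k (Fin.last r) : ℤ) + n)
  have hu : ∀ j n z, HasDerivAt (u j n) (u j (n + 1) z) z := fun j n z => by
    simpa [u, sub_sub] using hasDerivAt_scaledBernoulli ((k j.castSucc : ℤ) - n) z
  have hg : ∀ n z, HasDerivAt (g (n + 1)) (g n z) z := fun n z => by
    simpa [g, ← add_assoc] using hasDerivAt_scaledBernoulli ((k (Fin.last r) : ℤ) + (n + 1)) z
  have hvanish : multinomialLeibniz u (∑ j : Fin r, k j.castSucc + 1) = 0 :=
    multinomialLeibniz_eq_zero (N := fun j => k j.castSucc)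
      (fun j n hn => scaledBernoulli_of_neg (by omega)) (lt_add_one _)
  have hprod : ∀ z, ∏ j, scaledBernoulli (k j) z = multinomialLeibniz u 0 z * g 0 z := by
    intro z
    rw [multinomialLeibniz_zero, Fin.prod_univ_castSucc]
    simp [u, g]
  have hCt : ∀ (a : ℕ) (i : Fin r → ℕ), Ct (Fin.snoc (fun j : Fin r => (k j.castSucc : ℤ) - i j)
      ((k (Fin.last r) : ℤ) + a + 1)) x =
        (∏ j, u j (i j) x) * g (a + 1) x - (∏ j, u j (i j) 0) * g (a + 1) 0 := by
    intro a i
    rw [Ct_eq_prod_sub_prod, Fin.prod_univ_castSucc, Fin.prod_univ_castSucc]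
    simp [u, g, add_assoc]
  rw [It_eq_integral_prod, intervalIntegral.integral_congr fun z _ => hprod z,
    integral_mul_eq_sum_of_hasDerivAt (hasDerivAt_multinomialLeibniz hu) hvanish hg
      (continuous_scaledBernoulli _)]
  refine sum_congr rfl fun a _ => ?_
  simp only [hCt, multinomialLeibniz, sum_mul, mul_sub, ← sum_sub_distrib, mul_assoc]
end

section
/- For nonnegative integers k_1, k_2, k_3, k_4 with k_1 + k_2 + k_3 + k_4 even, writing B̃_n = B_n/n!, one has (1/(k_1!k_2!k_3!k_4!)) ∫₀¹ B_{k_1}(z)B_{k_2}(z)B_{k_3}(z)B_{k_4}(z) dz = 2 ∑_{a=0}^{k_1+k_2+k_3} (-1)^{a+1} B̃_{k_4+a+1} ∑_{i_1+i_2+i_3=a} binom(a; i_1,i_2,i_3) B̃_{k_1−i_1} B̃_{k_2−i_2} B̃_{k_3−i_3}, where terms with any negative index are zero. -/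
/-- `B̃_n = B_n / n!`, set to `0` for negative `n`. -/
noncomputable def Bt (n : ℤ) : ℝ :=
  if 0 ≤ n then B n.toNat 0 / n.toNat.factorial else 0

/-! Write `B̃ₙ(x) = Bₙ(x) / n!`, extended by `0` to negative `n`, so that `B̃ₙ' = B̃ₙ₋₁` for all
`n : ℤ`. Integrating `P · B̃_{k₄}` with `P = B̃_{k₁} B̃_{k₂} B̃_{k₃}` by parts `k₁ + k₂ + k₃ + 1`
times leaves only boundary terms `P⁽ᵃ⁾ · B̃_{k₄+a+1}` at `0` and `1`. At `0` the general Leibniz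
rule evaluates `P⁽ᵃ⁾(0)` as the inner sum; at `1` the reflection `Bₖ(1 - x) = (-1)ᵏ Bₖ(x)` shows
that the boundary term is `(-1)^(k₁+k₂+k₃+k₄+1)` times the one at `0`, which for even total degree
doubles the contribution instead of cancelling it. -/

open Polynomial Finset

theorem Nat.multinomial_univ_three_eq_choose_mul_choose (a b c : ℕ) :
    Nat.multinomial univ ![a, b, c] = (a + b + c).choose a * (b + c).choose b := by
  have huniv : (univ : Finset (Fin 3)) = {0, 1, 2} := by decide
  rw [huniv, Nat.multinomial_insert (by decide), Nat.multinomial_insert (by decide),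
    Nat.multinomial_singleton]
  simp [add_assoc]

theorem Finset.Nat.sum_antidiagonalTuple_three {M : Type*} [AddCommMonoid M]
    (f : (Fin 3 → ℕ) → M) (n : ℕ) :
    ∑ i ∈ antidiagonalTuple 3 n, f i =
      ∑ x ∈ antidiagonal n, ∑ y ∈ antidiagonal x.2, f ![x.1, y.1, y.2] := by
  rw [sum_sigma']
  refine sum_nbij' (fun i ↦ ⟨(i 0, i 1 + i 2), (i 1, i 2)⟩) (fun x ↦ ![x.1.1, x.2.1, x.2.2])
    ?_ ?_ ?_ ?_ ?_
  · intro i hi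
    rw [Nat.mem_antidiagonalTuple, Fin.sum_univ_three] at hi
    simpa [add_assoc] using hi
  · rintro ⟨⟨a, m⟩, ⟨b, c⟩⟩ hx
    simp only [mem_sigma, HasAntidiagonal.mem_antidiagonal] at hx
    rw [Nat.mem_antidiagonalTuple, Fin.sum_univ_three]
    simp only [Matrix.cons_val_zero, Matrix.cons_val_one, Matrix.cons_val_two, Matrix.head_cons,
      Matrix.tail_cons]
    omega
  · intro i _
    ext j
    fin_cases j <;> rfl
  · rintro ⟨⟨a, m⟩, ⟨b, c⟩⟩ hx
    simp only [mem_sigma, HasAntidiagonal.mem_antidiagonal] at hx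
    simp [← hx.2]
  · intro i _
    congr 1
    ext j
    fin_cases j <;> rfl

section Leibniz

variable {R : Type*} [CommSemiring R]

theorem Polynomial.iterate_derivative_mul_eq_sum_antidiagonal (p q : R[X]) (n : ℕ) :
    derivative^[n] (p * q) =
      ∑ x ∈ antidiagonal n, n.choose x.1 • (derivative^[x.1] p * derivative^[x.2] q) := by
  rw [iterate_derivative_mul, ← Nat.sum_antidiagonal_swap,
    Nat.sum_antidiagonal_eq_sum_range_succ_mk]
  refine sum_congr rfl fun k hk ↦ ?_
  rw [Prod.swap_prod_mk, Nat.choose_symm (Nat.lt_succ_iff.1 (mem_range.1 hk))]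

theorem Polynomial.iterate_derivative_mul_mul (f g h : R[X]) (n : ℕ) :
    derivative^[n] (f * g * h) =
      ∑ i ∈ Nat.antidiagonalTuple 3 n, Nat.multinomial univ i •
        (derivative^[i 0] f * derivative^[i 1] g * derivative^[i 2] h) := by
  rw [Nat.sum_antidiagonalTuple_three, mul_assoc, iterate_derivative_mul_eq_sum_antidiagonal]
  refine sum_congr rfl fun x hx ↦ ?_
  rw [iterate_derivative_mul_eq_sum_antidiagonal, mul_sum, smul_sum]
  refine sum_congr rfl fun y hy ↦ ?_
  rw [HasAntidiagonal.mem_antidiagonal] at hx hy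
  simp only [Matrix.cons_val_zero, Matrix.cons_val_one, Matrix.cons_val_two, Matrix.head_cons,
    Matrix.tail_cons, Nat.multinomial_univ_three_eq_choose_mul_choose]
  rw [← hx, ← hy, mul_smul_comm, smul_smul, mul_assoc, add_assoc]

end Leibniz

theorem integral_eval_mul_eval_eq_sum_add (Q : ℕ → ℝ[X])
    (hQ : ∀ n, derivative (Q (n + 1)) = Q n) (P : ℝ[X]) (x y : ℝ) (n N : ℕ) :
    ∫ z in x..y, eval z P * eval z (Q n) =
      ∑ a ∈ range N, (-1) ^ a * (eval y (derivative^[a] P) * eval y (Q (n + a + 1)) -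
          eval x (derivative^[a] P) * eval x (Q (n + a + 1))) +
        (-1) ^ N * ∫ z in x..y, eval z (derivative^[N] P) * eval z (Q (n + N)) := by
  induction N with
  | zero => simp
  | succ N ih =>
    have hparts := intervalIntegral.integral_mul_deriv_eq_deriv_mul (a := x) (b := y)
      (fun z _ ↦ (derivative^[N] P).hasDerivAt z) (fun z _ ↦ (Q (n + N + 1)).hasDerivAt z)
      ((derivative (derivative^[N] P)).continuous.intervalIntegrable ..)
      ((derivative (Q (n + N + 1))).continuous.intervalIntegrable ..)
    rw [hQ, ← Function.iterate_succ_apply' derivative, Nat.succ_eq_add_one] at hparts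
    rw [ih, hparts, sum_range_succ, pow_succ, ← add_assoc n N 1]
    ring

theorem integral_eval_mul_eval_eq_sum (Q : ℕ → ℝ[X])
    (hQ : ∀ n, derivative (Q (n + 1)) = Q n) (P : ℝ[X]) (x y : ℝ) {N : ℕ}
    (hN : P.natDegree < N) (n : ℕ) :
    ∫ z in x..y, eval z P * eval z (Q n) =
      ∑ a ∈ range N, (-1) ^ a * (eval y (derivative^[a] P) * eval y (Q (n + a + 1)) -
          eval x (derivative^[a] P) * eval x (Q (n + a + 1))) := by
  simp [integral_eval_mul_eval_eq_sum_add Q hQ P x y n N, iterate_derivative_eq_zero hN]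

theorem Polynomial.eval_one_iterate_derivative_of_comp_one_sub_X {R : Type*} [CommRing R]
    {p : R[X]} {K : ℕ} (hp : p.comp (1 - X) = (-1) ^ K * p) (a : ℕ) :
    eval 1 (derivative^[a] p) = (-1) ^ (K + a) * eval 0 (derivative^[a] p) := by
  have h := congr_arg (eval 0 ∘ derivative^[a]) hp
  have hK : ((-1) ^ K : R[X]) = C ((-1) ^ K) := by simp
  simp only [Function.comp_apply, iterate_derivative_comp_one_sub_X, hK,
    iterate_derivative_C_mul, eval_mul, eval_comp, eval_pow, eval_neg, eval_one, eval_C,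
    eval_sub, eval_X, sub_zero] at h
  rw [pow_add, mul_comm ((-1) ^ K : R), mul_assoc, ← h, ← mul_assoc, ← pow_add, ← two_mul,
    pow_mul]
  simp

theorem Polynomial.natDegree_bernoulli_le (k : ℕ) : (Polynomial.bernoulli k).natDegree ≤ k :=
  natDegree_sum_le_of_forall_le _ _ fun _ _ ↦ (natDegree_monomial_le _).trans (Nat.sub_le _ _)

noncomputable def bernoulliTilde (n : ℤ) : ℝ[X] :=
  if 0 ≤ n then (n.toNat.factorial : ℝ)⁻¹ • (Polynomial.bernoulli n.toNat).map (algebraMap ℚ ℝ)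
  else 0

theorem bernoulliTilde_natCast (k : ℕ) :
    bernoulliTilde k = (k.factorial : ℝ)⁻¹ • (Polynomial.bernoulli k).map (algebraMap ℚ ℝ) := by
  simp [bernoulliTilde]

theorem bernoulliTilde_of_neg {n : ℤ} (hn : n < 0) : bernoulliTilde n = 0 :=
  if_neg hn.not_ge

theorem derivative_bernoulliTilde (n : ℤ) :
    derivative (bernoulliTilde n) = bernoulliTilde (n - 1) := by
  rcases lt_or_ge n 1 with hn | hn
  · rw [bernoulliTilde_of_neg (by omega : n - 1 < 0)]
    rcases lt_or_ge n 0 with hneg | hnonneg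
    · rw [bernoulliTilde_of_neg hneg, derivative_zero]
    · obtain rfl : n = 0 := by omega
      simp [bernoulliTilde]
  · obtain ⟨k, rfl⟩ : ∃ k : ℕ, n = k + 1 := ⟨(n - 1).toNat, by omega⟩
    rw [add_sub_cancel_right, ← Nat.cast_succ, bernoulliTilde_natCast, bernoulliTilde_natCast,
      derivative_smul, derivative_map, derivative_bernoulli_add_one, Polynomial.map_mul,
      ← Nat.cast_succ, Polynomial.map_natCast, ← C_eq_natCast, C_mul', smul_smul,
      Nat.factorial_succ]
    congr 1
    push_cast
    field_simp

theorem iterate_derivative_bernoulliTilde (n : ℤ) (j : ℕ) :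
    derivative^[j] (bernoulliTilde n) = bernoulliTilde (n - j) := by
  induction j with
  | zero => simp
  | succ j ih =>
    rw [Function.iterate_succ_apply', ih, derivative_bernoulliTilde, Nat.cast_succ, sub_sub]

theorem eval_zero_bernoulliTilde (n : ℤ) : eval 0 (bernoulliTilde n) = Bt n := by
  unfold bernoulliTilde Bt
  split_ifs
  · rw [eval_smul, eval_map, B, aeval_def, smul_eq_mul, inv_mul_eq_div]
  · simp

theorem eval_bernoulliTilde_natCast (k : ℕ) (z : ℝ) :
    eval z (bernoulliTilde k) = B k z / k.factorial := by
  rw [bernoulliTilde_natCast, eval_smul, eval_map, B, aeval_def, smul_eq_mul, inv_mul_eq_div]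

theorem bernoulliTilde_comp_one_sub_X (k : ℕ) :
    (bernoulliTilde k).comp (1 - X) = (-1) ^ k * bernoulliTilde k := by
  have h := congr_arg (map (algebraMap ℚ ℝ)) (bernoulli_comp_one_sub_X k)
  simp only [map_comp, Polynomial.map_sub, Polynomial.map_one, map_X, Polynomial.map_mul,
    Polynomial.map_pow, Polynomial.map_neg] at h
  rw [bernoulliTilde_natCast, smul_comp, h, mul_smul_comm]

theorem natDegree_bernoulliTilde_le (k : ℕ) : (bernoulliTilde k).natDegree ≤ k := by
  rw [bernoulliTilde_natCast]
  exact (natDegree_smul_le _ _).trans (natDegree_map_le.trans (natDegree_bernoulli_le k))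

theorem eval_one_bernoulliTilde_natCast (k : ℕ) : eval 1 (bernoulliTilde k) = (-1) ^ k * Bt k := by
  simpa [eval_zero_bernoulliTilde] using
    eval_one_iterate_derivative_of_comp_one_sub_X (bernoulliTilde_comp_one_sub_X k) 0

theorem eval_zero_iterate_derivative_bernoulliTilde_mul_mul (m₁ m₂ m₃ : ℤ) (a : ℕ) :
    eval 0 (derivative^[a] (bernoulliTilde m₁ * bernoulliTilde m₂ * bernoulliTilde m₃)) =
      ∑ i ∈ Nat.antidiagonalTuple 3 a, (Nat.multinomial univ i : ℝ) *
        (Bt (m₁ - i 0) * Bt (m₂ - i 1) * Bt (m₃ - i 2)) := by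
  simp only [iterate_derivative_mul_mul, iterate_derivative_bernoulliTilde, eval_finsetSum,
    nsmul_eq_mul, eval_mul, eval_natCast, eval_zero_bernoulliTilde]

theorem integral_prod_four_bernoulli_even (k₁ k₂ k₃ k₄ : ℕ)
    (h : Even (k₁ + k₂ + k₃ + k₄)) :
    (∫ z in (0:ℝ)..1, B k₁ z * B k₂ z * B k₃ z * B k₄ z) /
        ((k₁.factorial : ℝ) * k₂.factorial * k₃.factorial * k₄.factorial) =
      2 * ∑ a ∈ Finset.range (k₁ + k₂ + k₃ + 1),
        (-1 : ℝ) ^ (a + 1) * Bt ((k₄ : ℤ) + a + 1) *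
          ∑ i ∈ Finset.Nat.antidiagonalTuple 3 a,
            (Nat.multinomial Finset.univ i : ℝ) *
              (Bt ((k₁ : ℤ) - i 0) * Bt ((k₂ : ℤ) - i 1) * Bt ((k₃ : ℤ) - i 2)) := by
  set P := bernoulliTilde k₁ * bernoulliTilde k₂ * bernoulliTilde k₃
  have hintegral : (∫ z in (0:ℝ)..1, B k₁ z * B k₂ z * B k₃ z * B k₄ z) /
      ((k₁.factorial : ℝ) * k₂.factorial * k₃.factorial * k₄.factorial) =
      ∫ z in (0:ℝ)..1, eval z P * eval z (bernoulliTilde k₄) := by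
    rw [← intervalIntegral.integral_div]
    refine intervalIntegral.integral_congr fun z _ ↦ ?_
    simp only [P, eval_mul, eval_bernoulliTilde_natCast]
    ring
  have hdeg : P.natDegree < k₁ + k₂ + k₃ + 1 :=
    Nat.lt_succ_of_le <| natDegree_mul_le.trans <| add_le_add
      (natDegree_mul_le.trans (add_le_add (natDegree_bernoulliTilde_le k₁)
        (natDegree_bernoulliTilde_le k₂))) (natDegree_bernoulliTilde_le k₃)
  have hreflect : P.comp (1 - X) = (-1) ^ (k₁ + k₂ + k₃) * P := by
    simp only [P, mul_comp, bernoulliTilde_comp_one_sub_X]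
    ring
  have hderiv (n : ℕ) : derivative (bernoulliTilde ↑(n + 1)) = bernoulliTilde n := by
    rw [derivative_bernoulliTilde, Nat.cast_succ, add_sub_cancel_right]
  rw [hintegral, integral_eval_mul_eval_eq_sum (bernoulliTilde ·) hderiv P 0 1 hdeg, mul_sum]
  refine sum_congr rfl fun a _ ↦ ?_
  have hsign : (-1 : ℝ) ^ (k₁ + k₂ + k₃ + a) * (-1) ^ (k₄ + a + 1) = -1 := by
    rw [← pow_add, show k₁ + k₂ + k₃ + a + (k₄ + a + 1) = (k₁ + k₂ + k₃ + k₄) + 2 * a + 1 by ring,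
      pow_succ, pow_add, pow_mul, h.neg_one_pow]
    norm_num
  rw [eval_one_iterate_derivative_of_comp_one_sub_X hreflect, eval_one_bernoulliTilde_natCast,
    eval_zero_bernoulliTilde, eval_zero_iterate_derivative_bernoulliTilde_mul_mul]
  push_cast
  linear_combination (-1) ^ a * Bt (k₄ + a + 1) * (∑ i ∈ Nat.antidiagonalTuple 3 a,
    (Nat.multinomial univ i : ℝ) * (Bt (k₁ - i 0) * Bt (k₂ - i 1) * Bt (k₃ - i 2))) * hsign
end

section
/- For integers k, l, m ≥ 1 with k + l + m even, ∫₀¹ B_k(z)B_l(z)B_m(z) dz = (-1)^{m+1} k! l! m! ∑_{a=0}^{k+l} [C(a, l-1) + C(a, k-1)] · (B_{m+a+1}/(m+a+1)!) · (B_{k+l−a−1}/(k+l−a−1)!), where terms with negative index k+l−a−1 are zero. -/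
/-- `B_n(x) / n!`; the extension by zero to negative `n` makes `BtFun (n - 1)` the derivative of
`BtFun n` for every integer `n`. -/
noncomputable def BtFun (n : ℤ) (x : ℝ) : ℝ :=
  if 0 ≤ n then B n.toNat x / n.toNat.factorial else 0

theorem Bt_eq_BtFun_zero (n : ℤ) : Bt n = BtFun n 0 := rfl

theorem BtFun_natCast (n : ℕ) (x : ℝ) : BtFun n x = B n x / n.factorial := by
  simp [BtFun]

theorem B_eq_factorial_mul_BtFun (n : ℕ) (x : ℝ) : B n x = n.factorial * BtFun n x := by
  rw [BtFun_natCast, mul_div_cancel₀ _ (by positivity)]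

theorem BtFun_of_neg {n : ℤ} (hn : n < 0) (x : ℝ) : BtFun n x = 0 := by
  simp [BtFun, not_le.mpr hn]

theorem B_zero_right (n : ℕ) : B n 0 = bernoulli n := by
  rw [B, Polynomial.aeval_def, Polynomial.eval₂_eq_eval_map, Polynomial.eval_zero_map,
    Polynomial.bernoulli_eval_zero]
  rfl

theorem B_one_right (n : ℕ) : B n 1 = (-1) ^ n * B n 0 := by
  rw [B_zero_right, B, Polynomial.aeval_def, Polynomial.eval₂_eq_eval_map,
    Polynomial.eval_one_map, Polynomial.bernoulli_eval_one, bernoulli'_eq_bernoulli]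
  simp

theorem hasDerivAt_B_s11 (n : ℕ) (x : ℝ) : HasDerivAt (B n) (n * B (n - 1) x) x := by
  have h := Polynomial.hasDerivAt_aeval (q := Polynomial.bernoulli n) x
  simp only [Polynomial.derivative_bernoulli, map_mul, map_natCast] at h
  exact h

theorem BtFun_zero (x : ℝ) : BtFun 0 x = 1 := by
  simp [BtFun, B]

theorem hasDerivAt_BtFun (n : ℤ) (x : ℝ) : HasDerivAt (BtFun n) (BtFun (n - 1) x) x := by
  rcases lt_or_ge n 0 with hn | hn
  · rw [BtFun_of_neg (by omega), show BtFun n = fun _ => 0 from funext (BtFun_of_neg hn)]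
    exact hasDerivAt_const x 0
  obtain ⟨k, rfl⟩ := Int.eq_ofNat_of_zero_le hn
  cases k with
  | zero =>
    rw [BtFun_of_neg (by omega), Nat.cast_zero, show BtFun 0 = fun _ => 1 from funext BtFun_zero]
    exact hasDerivAt_const x 1
  | succ k =>
    have hderiv := (hasDerivAt_B_s11 (k + 1) x).div_const ((k + 1).factorial : ℝ)
    rw [show BtFun ↑(k + 1) = fun y => B (k + 1) y / (k + 1).factorial from
      funext (BtFun_natCast (k + 1)), show ((k + 1 : ℕ) : ℤ) - 1 = k by omega, BtFun_natCast]
    refine hderiv.congr_deriv ?_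
    push_cast [Nat.factorial_succ, Nat.add_sub_cancel]
    field_simp

@[fun_prop]
theorem continuous_BtFun (n : ℤ) : Continuous (BtFun n) :=
  continuous_iff_continuousAt.2 fun x => (hasDerivAt_BtFun n x).continuousAt

theorem BtFun_one (n : ℤ) : BtFun n 1 = (-1) ^ n * BtFun n 0 := by
  rcases Int.eq_nat_or_neg n with ⟨k, rfl | rfl⟩
  · simp [BtFun_natCast, B_one_right, mul_div_assoc]
  · rcases k.eq_zero_or_pos with rfl | hk
    · simp [BtFun_zero]
    · simp [BtFun_of_neg (show -(k : ℤ) < 0 by omega)]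

theorem Bt_eq_zero_of_odd {n : ℤ} (hn : Odd n) (h1 : n ≠ 1) : Bt n = 0 := by
  rcases lt_or_ge n 0 with hneg | hpos
  · exact BtFun_of_neg hneg 0
  obtain ⟨k, rfl⟩ := Int.eq_ofNat_of_zero_le hpos
  have hk : Odd k := by exact_mod_cast hn
  rw [Bt_eq_BtFun_zero, BtFun_natCast, B_zero_right,
    bernoulli_eq_zero_of_odd hk (by have := hk.pos; omega)]
  simp

theorem Bt_one : Bt 1 = -1 / 2 := by
  simp [Bt, B_zero_right]

noncomputable def tripleIntegral (k l m : ℤ) : ℝ :=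
  ∫ z in (0 : ℝ)..1, BtFun k z * BtFun l z * BtFun m z

theorem tripleIntegral_comm (k l m : ℤ) : tripleIntegral k l m = tripleIntegral l k m := by
  simp only [tripleIntegral, mul_comm (BtFun k _)]

theorem tripleIntegral_of_neg_left {k : ℤ} (hk : k < 0) (l m : ℤ) :
    tripleIntegral k l m = 0 := by
  simp [tripleIntegral, BtFun_of_neg hk]

theorem integral_prod_three_B_eq (k l m : ℕ) :
    ∫ z in (0 : ℝ)..1, B k z * B l z * B m z
      = k.factorial * l.factorial * m.factorial * tripleIntegral k l m := by
  simp only [tripleIntegral, B_eq_factorial_mul_BtFun, ← intervalIntegral.integral_const_mul]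
  congr 1 with z
  ring

theorem tripleIntegral_eq_of_even {k l m : ℤ} (h : Even (k + l + m)) :
    tripleIntegral k l m = -2 * (Bt k * Bt l * Bt (m + 1))
      - tripleIntegral (k - 1) l (m + 1) - tripleIntegral k (l - 1) (m + 1) := by
  have hu (x : ℝ) (_ : x ∈ Set.uIcc (0 : ℝ) 1) : HasDerivAt (fun z => BtFun k z * BtFun l z)
      (BtFun (k - 1) x * BtFun l x + BtFun k x * BtFun (l - 1) x) x :=
    (hasDerivAt_BtFun k x).mul (hasDerivAt_BtFun l x)
  have hv (x : ℝ) (_ : x ∈ Set.uIcc (0 : ℝ) 1) :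
      HasDerivAt (BtFun (m + 1)) (BtFun m x) x := by
    simpa using hasDerivAt_BtFun (m + 1) x
  have parts := intervalIntegral.integral_mul_deriv_eq_deriv_mul hu hv
    (by apply Continuous.intervalIntegrable; fun_prop) ((continuous_BtFun m).intervalIntegrable 0 1)
  have hsign : (-1 : ℝ) ^ k * (-1) ^ l * (-1) ^ (m + 1) = -1 := by
    rw [← zpow_add₀ (by norm_num), ← zpow_add₀ (by norm_num), ← add_assoc,
      h.add_one.neg_one_zpow]
  simp only [add_mul, BtFun_one] at parts
  rw [intervalIntegral.integral_add (by apply Continuous.intervalIntegrable; fun_prop)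
    (by apply Continuous.intervalIntegrable; fun_prop)] at parts
  rw [tripleIntegral, tripleIntegral, tripleIntegral, Bt_eq_BtFun_zero, Bt_eq_BtFun_zero,
    Bt_eq_BtFun_zero]
  linear_combination parts + (BtFun k 0 * BtFun l 0 * BtFun (m + 1) 0) * hsign

noncomputable def intChoose (a : ℕ) (j : ℤ) : ℝ :=
  if 0 ≤ j then (a.choose j.toNat : ℝ) else 0

theorem intChoose_of_neg (a : ℕ) {j : ℤ} (hj : j < 0) : intChoose a j = 0 := by
  simp [intChoose, not_le.mpr hj]

theorem intChoose_natCast (a t : ℕ) : intChoose a t = a.choose t := by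
  simp [intChoose]

theorem intChoose_of_lt {a : ℕ} {j : ℤ} (h : a < j) : intChoose a j = 0 := by
  obtain ⟨t, rfl⟩ := Int.eq_ofNat_of_zero_le (show 0 ≤ j by omega)
  rw [intChoose_natCast, Nat.choose_eq_zero_of_lt (by omega), Nat.cast_zero]

theorem intChoose_zero_left (j : ℤ) : intChoose 0 j = if j = 0 then 1 else 0 := by
  rcases lt_trichotomy j 0 with hj | rfl | hj
  · rw [intChoose_of_neg 0 hj, if_neg hj.ne]
  · simp [intChoose]
  · rw [intChoose_of_lt (by omega), if_neg hj.ne']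

theorem intChoose_succ_left (a : ℕ) (j : ℤ) :
    intChoose (a + 1) j = intChoose a j + intChoose a (j - 1) := by
  rcases lt_or_ge j 0 with hj | hj
  · rw [intChoose_of_neg _ hj, intChoose_of_neg _ hj, intChoose_of_neg _ (by omega), add_zero]
  obtain ⟨t, rfl⟩ := Int.eq_ofNat_of_zero_le hj
  cases t with
  | zero => simp [intChoose]
  | succ t =>
    rw [show ((t + 1 : ℕ) : ℤ) - 1 = t by omega, intChoose_natCast, intChoose_natCast,
      intChoose_natCast, Nat.choose_succ_succ, Nat.cast_add, add_comm]

noncomputable def binomConv (j : ℤ) (n : ℕ) (m : ℤ) : ℝ :=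
  ∑ a ∈ Finset.range (n + 1), intChoose a j * Bt (m + a + 1) * Bt (n - a - 1)

theorem binomConv_of_neg {j : ℤ} (hj : j < 0) (n : ℕ) (m : ℤ) : binomConv j n m = 0 :=
  Finset.sum_eq_zero fun a _ => by rw [intChoose_of_neg a hj, zero_mul, zero_mul]

theorem binomConv_of_le {j : ℤ} {n : ℕ} (h : n ≤ j) (m : ℤ) : binomConv j n m = 0 := by
  refine Finset.sum_eq_zero fun a ha => ?_
  rcases lt_or_ge (a : ℤ) j with haj | haj
  · rw [intChoose_of_lt haj, zero_mul, zero_mul]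
  · have : (n : ℤ) - a - 1 < 0 := by have := Finset.mem_range.1 ha; omega
    rw [Bt_eq_BtFun_zero (_ - _), BtFun_of_neg this, mul_zero]

theorem binomConv_succ (j : ℤ) (n : ℕ) (m : ℤ) :
    binomConv j (n + 1) m = intChoose 0 j * Bt (m + 1) * Bt n
      + binomConv j n (m + 1) + binomConv (j - 1) n (m + 1) := by
  rw [binomConv, Finset.sum_range_succ', add_comm, binomConv, binomConv,
    add_assoc (intChoose 0 j * _ * _), ← Finset.sum_add_distrib]
  push_cast
  congr 1
  · ring_nf
  · refine Finset.sum_congr rfl fun a _ => ?_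
    rw [intChoose_succ_left]
    ring_nf

theorem binomConv_head_eq_boundary {k l m : ℕ} (hm : 1 ≤ m) (h : Even (k + l + m)) :
    (-1) ^ (m + 1) * ((intChoose 0 (l - 1) + intChoose 0 (k - 1)) * Bt (m + 1) * Bt (k + l - 1))
      = -2 * (Bt k * Bt l * Bt (m + 1)) := by
  simp only [intChoose_zero_left, sub_eq_zero, Nat.cast_eq_one]
  rcases Nat.even_or_odd m with hme | hmo
  · rw [Bt_eq_zero_of_odd (by exact_mod_cast hme.add_one) (by omega)]
    ring
  have hkl : Odd (k + l) := by
    rw [Nat.even_iff] at h; rw [Nat.odd_iff] at hmo ⊢; omega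
  rw [hmo.add_one.neg_one_pow, one_mul]
  by_cases hk1 : k = 1
  · have hl1 : l ≠ 1 := by rintro rfl; rw [Nat.odd_iff] at hkl; omega
    simp [hk1, hl1, Bt_one]
    ring
  by_cases hl1 : l = 1
  · simp [hk1, hl1, Bt_one]
    ring
  have hkl_zero : Bt k * Bt l = 0 := by
    rcases Nat.even_or_odd k with hke | hko
    · have hlo : Odd l := by rw [Nat.odd_iff] at hkl ⊢; rw [Nat.even_iff] at hke; omega
      rw [Bt_eq_zero_of_odd (n := l) (by exact_mod_cast hlo) (by exact_mod_cast hl1), mul_zero]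
    · rw [Bt_eq_zero_of_odd (n := k) (by exact_mod_cast hko) (by exact_mod_cast hk1), zero_mul]
  simp [hk1, hl1, hkl_zero]

theorem tripleIntegral_eq_binomConv {k l m : ℕ} (hm : 1 ≤ m) (h : Even (k + l + m)) :
    tripleIntegral k l m =
      (-1) ^ (m + 1) * (binomConv (l - 1) (k + l) m + binomConv (k - 1) (k + l) m) := by
  obtain ⟨n, hkl⟩ : ∃ n, k + l = n := ⟨_, rfl⟩
  rw [hkl]
  induction n generalizing k l m with
  | zero =>
    obtain ⟨rfl, rfl⟩ : k = 0 ∧ l = 0 := by omega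
    rw [tripleIntegral_eq_of_even (by exact_mod_cast h), ← binomConv_head_eq_boundary hm h,
      tripleIntegral_of_neg_left (by norm_num), tripleIntegral_comm,
      tripleIntegral_of_neg_left (by norm_num), binomConv_of_neg (by norm_num)]
    simp [intChoose_zero_left]
  | succ n ih =>
    have pred_left (i j : ℕ) (hij : i + j = n + 1) (h : Even (i + j + m)) :
        tripleIntegral (i - 1) j (m + 1) =
          (-1) ^ (m + 1 + 1) * (binomConv (j - 1) n (m + 1) + binomConv (i - 1 - 1) n (m + 1)) := by
      cases i with
      | zero =>
        rw [tripleIntegral_of_neg_left (by norm_num), binomConv_of_le (by omega),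
          binomConv_of_neg (by norm_num)]
        ring
      | succ i =>
        convert ih (k := i) (l := j) (m := m + 1) (by omega) (by convert h using 1; ring)
          (by omega) using 3 <;> push_cast <;> ring_nf
    have pred_right := pred_left l k (by omega) (by rwa [add_comm l k])
    rw [tripleIntegral_comm] at pred_right
    rw [tripleIntegral_eq_of_even (by exact_mod_cast h), pred_left k l hkl h, pred_right,
      binomConv_succ, binomConv_succ, ← binomConv_head_eq_boundary hm h,
      show ((k : ℤ) + l - 1) = n by omega]
    ring

theorem integral_prod_three_bernoulli_even (k l m : ℕ)
    (hk : 1 ≤ k) (hl : 1 ≤ l) (hm : 1 ≤ m) (h : Even (k + l + m)) :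
    ∫ z in (0:ℝ)..1, B k z * B l z * B m z =
      (-1 : ℝ) ^ (m + 1) * k.factorial * l.factorial * m.factorial *
        ∑ a ∈ Finset.range (k + l + 1),
          ((a.choose (l - 1) : ℝ) + (a.choose (k - 1) : ℝ)) *
            Bt ((m : ℤ) + a + 1) * Bt ((k : ℤ) + l - a - 1) := by
  have intChoose_pred {j : ℕ} (hj : 1 ≤ j) (a : ℕ) :
      intChoose a (j - 1) = a.choose (j - 1) := by
    rw [← intChoose_natCast, Nat.cast_sub hj, Nat.cast_one]
  rw [integral_prod_three_B_eq, tripleIntegral_eq_binomConv hm h, binomConv,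
    binomConv, ← Finset.sum_add_distrib, Finset.sum_congr rfl fun a _ => by
      rw [intChoose_pred hk, intChoose_pred hl, ← add_mul, ← add_mul, Nat.cast_add]]
  ring
end

section
/- The integral from 0 to 1 of B_1(z)²·B_2(z)·B_4(z) dz equals −(1/15)·B_2·B_6 − (1/5)·B_1²·B_6 − (1/70)·B_8 + (1/30)·B_6. -/
open Finset

lemma bernoulli_four : bernoulli 4 = -1 / 30 := by
  rw [bernoulli_eq_bernoulli'_of_ne_one (by norm_num), bernoulli'_four]

lemma bernoulli_six : bernoulli 6 = 1 / 42 := by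
  rw [bernoulli_eq_bernoulli'_of_ne_one (by norm_num), bernoulli'_def]
  norm_num [sum_range_succ, Nat.choose, bernoulli'_four,
    bernoulli'_eq_zero_of_odd (n := 5) (by decide)]

lemma bernoulli_eight : bernoulli 8 = -1 / 30 := by
  rw [bernoulli_eq_bernoulli'_of_ne_one (by norm_num), bernoulli'_def]
  norm_num [sum_range_succ, Nat.choose, bernoulli'_four,
    bernoulli'_eq_zero_of_odd (n := 5) (by decide), bernoulli'_eq_zero_of_odd (n := 7) (by decide),
    ← bernoulli_eq_bernoulli'_of_ne_one (n := 6) (by norm_num), bernoulli_six]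

lemma B_zero_eq_bernoulli (k : ℕ) : B k 0 = bernoulli k := by
  simpa [B] using
    Polynomial.aeval_algebraMap_apply_eq_algebraMap_eval (A := ℝ) 0 (Polynomial.bernoulli k)

lemma B_eq_sum_range (n : ℕ) (x : ℝ) :
    B n x = ∑ i ∈ range (n + 1), (bernoulli (n - i) * n.choose i : ℝ) * x ^ i := by
  simp [B, Polynomial.bernoulli_def, Polynomial.aeval_monomial]

lemma B_one_add_half (t : ℝ) : B 1 (t + 1 / 2) = t := by
  norm_num [B_eq_sum_range, sum_range_succ]

lemma B_two_add_half (t : ℝ) : B 2 (t + 1 / 2) = t ^ 2 - 1 / 12 := by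
  norm_num [B_eq_sum_range, sum_range_succ, bernoulli_two]
  ring

lemma B_four_add_half (t : ℝ) : B 4 (t + 1 / 2) = t ^ 4 - t ^ 2 / 2 + 7 / 240 := by
  norm_num [B_eq_sum_range, sum_range_succ, Nat.choose, bernoulli_two, bernoulli_four,
    bernoulli_eq_zero_of_odd (n := 3) (by decide)]
  ring

open intervalIntegral in
lemma integral_centered_integrand :
    ∫ t in -(1 / 2 : ℝ)..1 / 2, t ^ 2 * (t ^ 2 - 1 / 12) * (t ^ 4 - t ^ 2 / 2 + 7 / 240) =
      -1 / 5400 := by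
  have expand : ∀ t : ℝ, t ^ 2 * (t ^ 2 - 1 / 12) * (t ^ 4 - t ^ 2 / 2 + 7 / 240) =
      t ^ 8 - 7 / 12 * t ^ 6 + 17 / 240 * t ^ 4 - 7 / 2880 * t ^ 2 := fun t => by ring
  simp_rw [expand]
  rw [integral_sub, integral_add, integral_sub]
  · norm_num [integral_pow, integral_const_mul]
  all_goals exact Continuous.intervalIntegrable (by fun_prop) _ _

theorem integral_B1_sq_B2_B4 :
    ∫ z in (0:ℝ)..1, (B 1 z) ^ 2 * B 2 z * B 4 z =
      -(1 / 15) * B 2 0 * B 6 0 - (1 / 5) * (B 1 0) ^ 2 * B 6 0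
        - (1 / 70) * B 8 0 + (1 / 30) * B 6 0 := by
  have shift := intervalIntegral.integral_comp_add_right
    (fun z => (B 1 z) ^ 2 * B 2 z * B 4 z) (a := -(1 / 2)) (b := 1 / 2) (1 / 2)
  norm_num only [B_one_add_half, B_two_add_half, B_four_add_half] at shift
  rw [← shift, integral_centered_integrand]
  simp only [B_zero_eq_bernoulli, bernoulli_one, bernoulli_two, bernoulli_six, bernoulli_eight]
  norm_num
end
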